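/- arXiv:1204.5138 — 3 statements merged into one kernel-verified Lean document; each statement's English description precedes it below -/
import Mathlib

section
/- For each choice of sign, the assignment s_i ↦ ŝ̃_i^± (i = 1,…,n−1) defines an action of the symmetric group S_n on V ⊗ ℂ(z_1,…,z_n,h); that is, the operators ŝ̃_i^± satisfy (ŝ̃_i^±)² = id, ŝ̃_i^± ŝ̃_j^± = ŝ̃_j^± ŝ̃_i^± for |i−j| > 1, and ŝ̃_i^± ŝ̃_{i+1}^± ŝ̃_i^± = ŝ̃_{i+1}^± ŝ̃_i^± ŝ̃_{i+1}^±. -/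
/-!
The three relations are identities between rational functions, checked coordinatewise after
clearing the denominators `z_a - z_b ∓ h`; the braid relation is the Yang–Baxter equation for
Yang's R-matrix.

The action of `Sₙ` then comes from the Coxeter presentation of `Sₙ`, valid for elements `t i` of
any monoid. A permutation `σ` fixing every point `> k` factors uniquely as
`τ * (s_{k-1} ⋯ s_p)` with `p = σ⁻¹ k` and `τ` fixing every point `≥ k`; iterating gives a
canonical word for `σ`. Right multiplication by `s_i` changes the canonical word only by the
Coxeter relations (four cases: `p < i`, `p = i`, `p = i + 1`, `p > i + 1`), so the product of the
`t`'s along canonical words is multiplicative.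
-/

open scoped BigOperators

noncomputable section

namespace GRTV

/-- The field `ℂ(z_1,…,z_n,h)` of rational functions. -/
abbrev K (n : ℕ) : Type := FractionRing (MvPolynomial (Fin n ⊕ Unit) ℂ)

/-- The variable `z_i`. -/
def z {n : ℕ} (i : Fin n) : K n :=
  algebraMap (MvPolynomial (Fin n ⊕ Unit) ℂ) (K n) (MvPolynomial.X (Sum.inl i))

/-- The variable `h`. -/
def hvar {n : ℕ} : K n :=
  algebraMap (MvPolynomial (Fin n ⊕ Unit) ℂ) (K n) (MvPolynomial.X (Sum.inr ()))

/-- The field automorphism of `ℂ(z_1,…,z_n,h)` permuting the variables `z_i` by `σ`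
(and fixing `h`); `f ↦ f^σ`. -/
def permK {n : ℕ} (σ : Equiv.Perm (Fin n)) : K n ≃+* K n :=
  IsFractionRing.ringEquivOfRingEquiv
    (MvPolynomial.renameEquiv ℂ (Equiv.sumCongr σ (Equiv.refl Unit))).toRingEquiv

/-- `V ⊗ ℂ(z_1,…,z_n,h)` in coordinates: a vector is the family of its coordinates
in the basis `{v_I}`, where a basis index (a decomposition `I`) is recorded as the word
`m : Fin n → Fin N` with `I_j = m⁻¹(j)`. -/
abbrev VV (n N : ℕ) : Type := (Fin n → Fin N) → K n

/-- `h` for the `+` case (`ε = true`) and `-h` for the `−` case (`ε = false`). -/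
def sign' {n : ℕ} (ε : Bool) : K n := if ε then hvar else -hvar

def fin1 {n : ℕ} (i : ℕ) (hi : i + 1 < n) : Fin n := ⟨i, Nat.lt_of_succ_lt hi⟩
def fin2 {n : ℕ} (i : ℕ) (hi : i + 1 < n) : Fin n := ⟨i + 1, hi⟩

/-- The operator `ŝ̃_i^±`:
`ŝ̃_i^± f = ((z_i−z_{i+1})P^{(i,i+1)} ∓ h)/(z_i−z_{i+1} ∓ h) · f^{s_i}`. -/
def tOp {n N : ℕ} (ε : Bool) (i : ℕ) (hi : i + 1 < n) (f : VV n N) : VV n N :=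
  fun m =>
    ((z (fin1 i hi) - z (fin2 i hi)) *
          permK (Equiv.swap (fin1 i hi) (fin2 i hi))
            (f (m ∘ ⇑(Equiv.swap (fin1 i hi) (fin2 i hi))))
        - sign' ε * permK (Equiv.swap (fin1 i hi) (fin2 i hi)) (f m))
      / (z (fin1 i hi) - z (fin2 i hi) - sign' ε)

end GRTV

section SymmetricGroupPresentation

open Equiv

variable {M : Type*} [Monoid M]

structure SymmGroupRelations (n : ℕ) (t : ℕ → M) : Prop where
  mul_self : ∀ i, i + 1 < n → t i * t i = 1
  comm : ∀ i j, i + 1 < j → j + 1 < n → t i * t j = t j * t i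
  braid : ∀ i, i + 2 < n → t i * t (i + 1) * t i = t (i + 1) * t i * t (i + 1)

def descProd (t : ℕ → M) (k j : ℕ) : M := ((List.Ico j k).reverse.map t).prod

section descProd

variable (t : ℕ → M) {k j m : ℕ}

@[simp]
theorem descProd_self (k : ℕ) : descProd t k k = 1 := by
  simp [descProd, List.Ico.self_empty]

theorem descProd_succ_top (h : j ≤ k) : descProd t (k + 1) j = t k * descProd t k j := by
  simp [descProd, List.Ico.succ_top h]

theorem descProd_eq_mul_bottom (h : j < k) : descProd t k j = descProd t k (j + 1) * t j := by
  simp [descProd, List.Ico.eq_cons h]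

theorem descProd_split (hjm : j ≤ m) (hmk : m ≤ k) :
    descProd t k j = descProd t k m * descProd t m j := by
  simp [descProd, ← List.Ico.append_consecutive hjm hmk]

theorem descProd_mem {S : Type*} [SetLike S M] [SubmonoidClass S M] {s : S}
    (h : ∀ l, j ≤ l → l < k → t l ∈ s) : descProd t k j ∈ s :=
  list_prod_mem fun x hx => by
    obtain ⟨l, hl, rfl⟩ := List.mem_map.mp hx
    rw [List.mem_reverse, List.Ico.mem] at hl
    exact h l hl.1 hl.2

theorem commute_descProd {x : M} (h : ∀ l, j ≤ l → l < k → Commute x (t l)) :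
    Commute x (descProd t k j) :=
  Commute.list_prod_right _ _ fun y hy => by
    obtain ⟨l, hl, rfl⟩ := List.mem_map.mp hy
    rw [List.mem_reverse, List.Ico.mem] at hl
    exact h l hl.1 hl.2

end descProd

namespace SymmGroupRelations

variable {n : ℕ} {t : ℕ → M}

theorem commute_descProd_of_lt (ht : SymmGroupRelations n t) {i j k : ℕ} (hij : i + 1 < j)
    (hk : k < n) :
    Commute (t i) (descProd t k j) :=
  commute_descProd t fun l hjl hlk => ht.comm i l (by omega) (by omega)

theorem commute_descProd_of_gt (ht : SymmGroupRelations n t) {i j k : ℕ} (hki : k < i)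
    (hi : i + 1 < n) :
    Commute (t i) (descProd t k j) :=
  commute_descProd t fun l _ hlk => (ht.comm l i (by omega) hi).symm

theorem descProd_mul_bottom (ht : SymmGroupRelations n t) {i k : ℕ} (hik : i < k) (hk : k < n) :
    descProd t k i * t i = descProd t k (i + 1) := by
  rw [descProd_eq_mul_bottom t hik, mul_assoc, ht.mul_self i (by omega), mul_one]

theorem mul_descProd (ht : SymmGroupRelations n t) {j m k : ℕ} (hjm : j ≤ m) (hmk : m + 2 ≤ k)
    (hk : k < n) :
    t m * descProd t k j = descProd t k j * t (m + 1) := by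
  have hsplit : descProd t k j = descProd t k (m + 2) * (t (m + 1) * t m) * descProd t m j := by
    rw [descProd_split t (by omega : j ≤ m + 2) hmk, descProd_split t hjm (by omega : m ≤ m + 2),
      descProd_succ_top t (by omega), descProd_succ_top t le_rfl, descProd_self, mul_one]
    simp only [mul_assoc]
  have hbraid : t m * (t (m + 1) * t m) = (t (m + 1) * t m) * t (m + 1) := by
    rw [← mul_assoc, ht.braid m (by omega), mul_assoc]
  calc t m * descProd t k j
      = descProd t k (m + 2) * (t m * (t (m + 1) * t m)) * descProd t m j := by
        rw [hsplit, ← mul_assoc, ← mul_assoc, (ht.commute_descProd_of_lt (by omega) hk).eq]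
        simp only [mul_assoc]
    _ = descProd t k (m + 2) * (t (m + 1) * t m) * (t (m + 1) * descProd t m j) := by
        rw [hbraid]
        simp only [mul_assoc]
    _ = descProd t k j * t (m + 1) := by
        rw [(ht.commute_descProd_of_gt (by omega) (by omega)).eq, hsplit]
        simp only [mul_assoc]

end SymmGroupRelations

namespace Equiv.Perm

variable {n : ℕ}

def adjSwap (n i : ℕ) : Perm (Fin n) :=
  if h : i + 1 < n then swap ⟨i, by omega⟩ ⟨i + 1, h⟩ else 1

theorem adjSwap_of_lt {i : ℕ} (h : i + 1 < n) : adjSwap n i = swap ⟨i, by omega⟩ ⟨i + 1, h⟩ :=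
  dif_pos h

theorem adjSwap_apply_of_ne {i : ℕ} {x : Fin n} (h₁ : (x : ℕ) ≠ i) (h₂ : (x : ℕ) ≠ i + 1) :
    adjSwap n i x = x := by
  unfold adjSwap
  split
  · exact swap_apply_of_ne_of_ne (Fin.ne_of_val_ne h₁) (Fin.ne_of_val_ne h₂)
  · rfl

theorem symmGroupRelations_adjSwap (n : ℕ) : SymmGroupRelations n (adjSwap n) where
  mul_self i hi := by rw [adjSwap_of_lt hi, swap_mul_self]
  comm i j hij hj := by
    rw [adjSwap_of_lt (by omega : i + 1 < n), adjSwap_of_lt hj]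
    exact (disjoint_swap_swap (by simp [Fin.ext_iff]; omega)).commute.eq
  braid i hi := by
    rw [adjSwap_of_lt (by omega : i + 1 < n), adjSwap_of_lt hi]
    set a : Fin n := ⟨i, by omega⟩
    set b : Fin n := ⟨i + 1, by omega⟩
    set c : Fin n := ⟨i + 1 + 1, hi⟩
    have hab : a ≠ b := by simp only [a, b, ne_eq, Fin.mk.injEq]; omega
    have hac : a ≠ c := by simp only [a, c, ne_eq, Fin.mk.injEq]; omega
    have hbc : b ≠ c := by simp only [b, c, ne_eq, Fin.mk.injEq]; omega
    rw [show swap a b * swap b c * swap a b = swap b a * swap c b * swap b a by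
        rw [swap_comm a b, swap_comm b c],
      swap_mul_swap_mul_swap hbc.symm hac.symm, swap_mul_swap_mul_swap hab hac, swap_comm]

theorem closure_adjSwap (n : ℕ) :
    Submonoid.closure {σ : Perm (Fin n) | ∃ i, i + 1 < n ∧ adjSwap n i = σ} = ⊤ := by
  cases n with
  | zero => exact Subsingleton.elim _ _
  | succ m =>
    refine top_unique ((mclosure_swap_castSucc_succ m).symm.le.trans (Submonoid.closure_mono ?_))
    rintro _ ⟨i, rfl⟩
    exact ⟨i, by omega, adjSwap_of_lt _⟩

def fixingFrom (n k : ℕ) : Subgroup (Perm (Fin n)) :=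
  fixingSubgroup (Perm (Fin n)) {x : Fin n | k ≤ (x : ℕ)}

theorem mem_fixingFrom {k : ℕ} {σ : Perm (Fin n)} :
    σ ∈ fixingFrom n k ↔ ∀ x : Fin n, k ≤ (x : ℕ) → σ x = x := by
  simp [fixingFrom, mem_fixingSubgroup_iff]

theorem mem_fixingFrom_self (σ : Perm (Fin n)) : σ ∈ fixingFrom n n :=
  mem_fixingFrom.mpr fun x hx => absurd x.isLt (by omega)

theorem adjSwap_mem_fixingFrom {i k : ℕ} (h : i + 1 < k) : adjSwap n i ∈ fixingFrom n k :=
  mem_fixingFrom.mpr fun _ hx => adjSwap_apply_of_ne (by omega) (by omega)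

theorem descProd_adjSwap_mem_fixingFrom (k j : ℕ) :
    descProd (adjSwap n) k j ∈ fixingFrom n (k + 1) :=
  descProd_mem _ fun _ _ hl => adjSwap_mem_fixingFrom (by omega)

theorem descProd_adjSwap_apply_bottom {j k : ℕ} (hjk : j ≤ k) (hk : k < n) :
    descProd (adjSwap n) k j ⟨j, by omega⟩ = ⟨k, hk⟩ := by
  induction k, hjk using Nat.le_induction with
  | base => simp
  | succ k hjk ih =>
    rw [descProd_succ_top _ hjk, mul_apply, ih (by omega), adjSwap_of_lt hk, swap_apply_left]

theorem exists_eq_mul_descProd {k : ℕ} (hk : k < n) {σ : Perm (Fin n)}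
    (hσ : σ ∈ fixingFrom n (k + 1)) :
    ∃ τ ∈ fixingFrom n k, ∃ p ≤ k, σ = τ * descProd (adjSwap n) k p := by
  set p : Fin n := σ⁻¹ ⟨k, hk⟩ with hp
  have hpk : (p : ℕ) ≤ k := by
    by_contra! h
    have := congrArg Fin.val ((eq_inv_iff_eq.mp hp).symm.trans (mem_fixingFrom.mp hσ p h))
    simp only at this
    omega
  set c := descProd (adjSwap n) k p
  have hc : c⁻¹ ⟨k, hk⟩ = p :=
    inv_eq_iff_eq.mpr (descProd_adjSwap_apply_bottom hpk hk).symm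
  refine ⟨σ * c⁻¹, mem_fixingFrom.mpr fun x hx => ?_, p, hpk, by rw [inv_mul_cancel_right]⟩
  obtain rfl | hx := eq_or_lt_of_le hx
  · rw [mul_apply, show x = ⟨x, hk⟩ from rfl, hc]
    exact eq_inv_iff_eq.mp hp
  · rw [mul_apply, mem_fixingFrom.mp (inv_mem (descProd_adjSwap_mem_fixingFrom k p)) x hx,
      mem_fixingFrom.mp hσ x hx]

/-- For `σ` fixing every point `≥ k`, the product of the `t i` along the canonical word of `σ`
built from the factorizations of `exists_eq_mul_descProd`; other values of `σ` are never used. -/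
def canonicalProd (t : ℕ → M) : (k : ℕ) → k ≤ n → Perm (Fin n) → M
  | 0, _, _ => 1
  | k + 1, hk, σ =>
    canonicalProd t k (Nat.le_of_succ_le hk) (σ * (descProd (adjSwap n) k (σ⁻¹ ⟨k, hk⟩))⁻¹) *
      descProd t k (σ⁻¹ ⟨k, hk⟩)

theorem canonicalProd_succ_of_eq (t : ℕ → M) {k : ℕ} (hk : k + 1 ≤ n) {σ τ : Perm (Fin n)}
    (hτ : τ ∈ fixingFrom n k) {p : ℕ} (hp : p ≤ k) (hσ : σ = τ * descProd (adjSwap n) k p) :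
    canonicalProd t (k + 1) hk σ = canonicalProd t k (Nat.le_of_succ_le hk) τ * descProd t k p := by
  have hσk : ((σ⁻¹ ⟨k, hk⟩ : Fin n) : ℕ) = p := by
    rw [hσ, mul_inv_rev, mul_apply, mem_fixingFrom.mp (inv_mem hτ) _ le_rfl,
      inv_eq_iff_eq.mpr (descProd_adjSwap_apply_bottom hp hk).symm]
  rw [canonicalProd, hσk, hσ, mul_inv_cancel_right]

theorem canonicalProd_one (t : ℕ → M) {k : ℕ} (hk : k ≤ n) : canonicalProd t k hk 1 = 1 := by
  induction k with
  | zero => rfl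
  | succ k ih =>
    rw [canonicalProd_succ_of_eq t hk (one_mem _) le_rfl (by simp), ih, descProd_self, mul_one]

theorem canonicalProd_mul_adjSwap {t : ℕ → M} (ht : SymmGroupRelations n t) {k : ℕ} (hk : k ≤ n)
    {σ : Perm (Fin n)} (hσ : σ ∈ fixingFrom n k) {i : ℕ} (hi : i + 1 < k) :
    canonicalProd t k hk (σ * adjSwap n i) = canonicalProd t k hk σ * t i := by
  induction k generalizing σ i with
  | zero => omega
  | succ k ih =>
    have hs := symmGroupRelations_adjSwap n
    obtain ⟨τ, hτ, p, hp, rfl⟩ := exists_eq_mul_descProd hk hσ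
    rw [canonicalProd_succ_of_eq t hk hτ hp rfl, mul_assoc]
    rcases lt_trichotomy p i with hpi | rfl | hip
    · obtain ⟨m, rfl⟩ : ∃ m, i = m + 1 := ⟨i - 1, by omega⟩
      rw [← hs.mul_descProd (by omega) (by omega) hk, ← mul_assoc,
        canonicalProd_succ_of_eq t hk (mul_mem hτ (adjSwap_mem_fixingFrom (by omega))) hp rfl,
        ih _ hτ (by omega), mul_assoc, ht.mul_descProd (by omega) (by omega) hk, mul_assoc]
    · rw [hs.descProd_mul_bottom (by omega) hk, canonicalProd_succ_of_eq t hk hτ (by omega) rfl,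
        mul_assoc, ht.descProd_mul_bottom (by omega) hk]
    obtain rfl | hip := eq_or_lt_of_le (Nat.succ_le_of_lt hip)
    · rw [← descProd_eq_mul_bottom _ (by omega), canonicalProd_succ_of_eq t hk hτ (by omega) rfl,
        mul_assoc, ← descProd_eq_mul_bottom t (by omega)]
    · rw [← (hs.commute_descProd_of_lt hip hk).eq, ← mul_assoc,
        canonicalProd_succ_of_eq t hk (mul_mem hτ (adjSwap_mem_fixingFrom (by omega))) hp rfl,
        ih _ hτ (by omega), mul_assoc, (ht.commute_descProd_of_lt hip hk).eq, mul_assoc]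

theorem canonicalProd_adjSwap {t : ℕ → M} (ht : SymmGroupRelations n t) {i : ℕ} (hi : i + 1 < n) :
    canonicalProd t n le_rfl (adjSwap n i) = t i := by
  simpa [canonicalProd_one] using canonicalProd_mul_adjSwap ht le_rfl (mem_fixingFrom_self 1) hi

end Equiv.Perm

namespace SymmGroupRelations

open Equiv Perm

variable {n : ℕ} {t : ℕ → M}

def lift (ht : SymmGroupRelations n t) : Perm (Fin n) →* M :=
  MonoidHom.ofClosureMEqTopRight (canonicalProd t n le_rfl) (closure_adjSwap n)
    (canonicalProd_one t le_rfl) (by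
      rintro σ _ ⟨i, hi, rfl⟩
      rw [canonicalProd_mul_adjSwap ht le_rfl (mem_fixingFrom_self σ) hi,
        canonicalProd_adjSwap ht hi])

theorem lift_adjSwap (ht : SymmGroupRelations n t) {i : ℕ} (hi : i + 1 < n) :
    ht.lift (adjSwap n i) = t i :=
  canonicalProd_adjSwap ht hi

end SymmGroupRelations

end SymmetricGroupPresentation

namespace GRTV

section Relations

open Equiv

variable {n N : ℕ}

theorem permK_algebraMap (σ : Perm (Fin n)) (p : MvPolynomial (Fin n ⊕ Unit) ℂ) :
    permK σ (algebraMap _ (K n) p) =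
      algebraMap _ (K n) (MvPolynomial.rename (sumCongr σ (Equiv.refl Unit)) p) := by
  simp [permK]

@[simp]
theorem permK_z (σ : Perm (Fin n)) (i : Fin n) : permK σ (z i) = z (σ i) := by
  simp [z, permK_algebraMap]

@[simp]
theorem permK_sign' (σ : Perm (Fin n)) (ε : Bool) : permK σ (sign' ε : K n) = sign' ε := by
  cases ε <;> simp [sign', hvar, permK_algebraMap]

@[simp]
theorem permK_permK (σ τ : Perm (Fin n)) (x : K n) :
    permK σ (permK τ x) = permK (σ * τ) x := by
  have : ((permK σ).toRingHom.comp (permK τ).toRingHom).comp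
      (algebraMap (MvPolynomial (Fin n ⊕ Unit) ℂ) (K n)) =
      (permK (σ * τ)).toRingHom.comp (algebraMap _ (K n)) := by
    ext p <;> simp [permK_algebraMap]
  exact RingHom.congr_fun (IsLocalization.ringHom_ext (nonZeroDivisors _) this) x

@[simp]
theorem permK_one (x : K n) : permK 1 x = x := by
  have : (permK (1 : Perm (Fin n))).toRingHom.comp
      (algebraMap (MvPolynomial (Fin n ⊕ Unit) ℂ) (K n)) =
      (RingHom.id (K n)).comp (algebraMap _ (K n)) := by
    ext p <;> simp [permK_algebraMap]
  exact RingHom.congr_fun (IsLocalization.ringHom_ext (nonZeroDivisors _) this) x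

theorem z_sub_z_sub_sign'_ne_zero {a b : Fin n} (hab : a ≠ b) (ε : Bool) :
    (z a - z b - sign' ε : K n) ≠ 0 := by
  set p : MvPolynomial (Fin n ⊕ Unit) ℂ :=
    MvPolynomial.X (.inl a) - MvPolynomial.X (.inl b) -
      (if ε then MvPolynomial.X (.inr ()) else -MvPolynomial.X (.inr ()))
  have hp : (z a - z b - sign' ε : K n) = algebraMap _ (K n) p := by
    cases ε <;> simp [p, z, sign', hvar]
  have hp0 : p ≠ 0 := fun h => by
    have := congrArg (MvPolynomial.eval fun v => if v = .inl a then (1 : ℂ) else 0) h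
    cases ε <;> simp [p, Ne.symm hab] at this
  rw [hp]
  exact (map_ne_zero_iff _ (IsFractionRing.injective _ _)).mpr hp0

def swapOp (ε : Bool) (a b : Fin n) (f : VV n N) : VV n N :=
  fun m =>
    ((z a - z b) * permK (swap a b) (f (m ∘ ⇑(swap a b))) - sign' ε * permK (swap a b) (f m)) /
      (z a - z b - sign' ε)

variable (ε : Bool)

theorem swapOp_swapOp {a b : Fin n} (hab : a ≠ b) (f : VV n N) :
    swapOp ε a b (swapOp ε a b f) = f := by
  funext m
  have h₁ := z_sub_z_sub_sign'_ne_zero hab ε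
  have h₂ := z_sub_z_sub_sign'_ne_zero hab.symm ε
  simp only [swapOp, map_div₀, map_sub, map_mul, permK_permK, permK_sign', permK_z,
    Function.comp_assoc, ← Perm.coe_mul, swap_mul_self, permK_one, Perm.coe_one, Function.comp_id,
    swap_apply_left, swap_apply_right]
  field_simp
  ring

theorem swapOp_comm {a b c d : Fin n} (hab : a ≠ b) (hcd : c ≠ d) (hac : a ≠ c) (had : a ≠ d)
    (hbc : b ≠ c) (hbd : b ≠ d) (f : VV n N) :
    swapOp ε a b (swapOp ε c d f) = swapOp ε c d (swapOp ε a b f) := by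
  funext m
  have hcomm : swap a b * swap c d = swap c d * swap a b :=
    (Perm.disjoint_swap_swap (by simp [*])).commute.eq
  have h₁ := z_sub_z_sub_sign'_ne_zero hab ε
  have h₂ := z_sub_z_sub_sign'_ne_zero hcd ε
  simp only [swapOp, map_div₀, map_sub, map_mul, permK_permK, permK_sign', permK_z,
    Function.comp_assoc, ← Perm.coe_mul, swap_apply_of_ne_of_ne hac had,
    swap_apply_of_ne_of_ne hbc hbd, swap_apply_of_ne_of_ne hac.symm hbc.symm, swap_apply_of_ne_of_ne had.symm hbd.symm, hcomm]
  field_simp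
  ring

theorem swapOp_braid {a b c : Fin n} (hab : a ≠ b) (hbc : b ≠ c) (hac : a ≠ c) (f : VV n N) :
    swapOp ε a b (swapOp ε b c (swapOp ε a b f)) =
      swapOp ε b c (swapOp ε a b (swapOp ε b c f)) := by
  funext m
  have hbraid : swap a b * (swap b c * swap a b) = swap b c * (swap a b * swap b c) := by
    rw [← mul_assoc, ← mul_assoc, swap_mul_swap_mul_swap hab hac, swap_comm a b, swap_comm b c,
      swap_mul_swap_mul_swap hbc.symm hac.symm, swap_comm]
  have h₁ := z_sub_z_sub_sign'_ne_zero hab ε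
  have h₂ := z_sub_z_sub_sign'_ne_zero hbc ε
  have h₃ := z_sub_z_sub_sign'_ne_zero hac ε
  simp only [swapOp, map_div₀, map_sub, map_mul, permK_permK, permK_sign', permK_z,
    Function.comp_assoc, ← Perm.coe_mul, mul_assoc, hbraid, swap_apply_left, swap_apply_right,
    swap_apply_of_ne_of_ne hac.symm hbc.symm, swap_apply_of_ne_of_ne hab hac]
  field_simp
  simp only [swap_mul_self, Perm.coe_one, Function.comp_id]
  ring

theorem fin1_ne_fin2 (i : ℕ) (hi : i + 1 < n) : fin1 i hi ≠ fin2 i hi := by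
  simp [fin1, fin2, Fin.ext_iff]

theorem tOp_tOp (i : ℕ) (hi : i + 1 < n) (f : VV n N) : tOp ε i hi (tOp ε i hi f) = f :=
  swapOp_swapOp ε (fin1_ne_fin2 i hi) f

theorem tOp_comm (i j : ℕ) (hi : i + 1 < n) (hj : j + 1 < n) (hij : i + 1 < j) (f : VV n N) :
    tOp ε i hi (tOp ε j hj f) = tOp ε j hj (tOp ε i hi f) :=
  swapOp_comm ε (fin1_ne_fin2 i hi) (fin1_ne_fin2 j hj)
    (by simp [fin1, Fin.ext_iff]; omega) (by simp [fin1, fin2, Fin.ext_iff]; omega)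
    (by simp [fin1, fin2, Fin.ext_iff]; omega) (by simp [fin2, Fin.ext_iff]; omega) f

theorem tOp_braid (i : ℕ) (hi : i + 1 < n) (hi₂ : i + 1 + 1 < n) (f : VV n N) :
    tOp ε i hi (tOp ε (i + 1) hi₂ (tOp ε i hi f)) =
      tOp ε (i + 1) hi₂ (tOp ε i hi (tOp ε (i + 1) hi₂ f)) :=
  swapOp_braid ε (fin1_ne_fin2 i hi) (fin1_ne_fin2 (i + 1) hi₂)
    (by simp [fin1, fin2, Fin.ext_iff]; omega) f

def tOpFamily (n N : ℕ) (ε : Bool) (i : ℕ) : Function.End (VV n N) :=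
  if h : i + 1 < n then (tOp ε i h : Function.End (VV n N)) else 1

theorem tOpFamily_of_lt {i : ℕ} (h : i + 1 < n) : tOpFamily n N ε i = tOp ε i h :=
  dif_pos h

theorem symmGroupRelations_tOpFamily : SymmGroupRelations n (tOpFamily n N ε) where
  mul_self i hi := by
    rw [tOpFamily_of_lt ε hi]
    exact funext (tOp_tOp ε i hi)
  comm i j hij hj := by
    rw [tOpFamily_of_lt ε (by omega : i + 1 < n), tOpFamily_of_lt ε hj]
    exact funext (tOp_comm ε i j _ hj hij)
  braid i hi := by
    rw [tOpFamily_of_lt ε (by omega : i + 1 < n), tOpFamily_of_lt ε hi]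
    exact funext (tOp_braid ε i _ hi)

end Relations

/-- For each choice of sign, the assignment `s_i ↦ ŝ̃_i^±` defines an action
of `S_n` on `V ⊗ ℂ(z_1,…,z_n,h)`; that is, the operators `ŝ̃_i^±` satisfy the Coxeter
relations of the symmetric group. -/
theorem statement1 (n N : ℕ) (ε : Bool) :
    (∀ (i : ℕ) (hi : i + 1 < n) (f : VV n N), tOp ε i hi (tOp ε i hi f) = f) ∧
    (∀ (i j : ℕ) (hi : i + 1 < n) (hj : j + 1 < n), i + 1 < j →
      ∀ f : VV n N, tOp ε i hi (tOp ε j hj f) = tOp ε j hj (tOp ε i hi f)) ∧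
    (∀ (i : ℕ) (hi : i + 1 < n) (hi2 : i + 1 + 1 < n) (f : VV n N),
      tOp ε i hi (tOp ε (i+1) hi2 (tOp ε i hi f)) =
        tOp ε (i+1) hi2 (tOp ε i hi (tOp ε (i+1) hi2 f))) ∧
    (∃ ρ : Equiv.Perm (Fin n) →* Function.End (VV n N),
      ∀ (i : ℕ) (hi : i + 1 < n),
        ρ (Equiv.swap (fin1 i hi) (fin2 i hi)) = tOp ε i hi) := by
  refine ⟨tOp_tOp ε, tOp_comm ε, tOp_braid ε, (symmGroupRelations_tOpFamily ε).lift, fun i hi => ?_⟩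
  rw [show Equiv.swap (fin1 i hi) (fin2 i hi) = Equiv.Perm.adjSwap n i from
      (Equiv.Perm.adjSwap_of_lt hi).symm,
    SymmGroupRelations.lift_adjSwap _ hi, tOpFamily_of_lt ε hi]

end GRTV
end
end

section
/- Let N = n and consider the operators Y_1^+,…,Y_n^+ and G_{1,2},…,G_{n−1,n} on V_{(1,…,1)} ⊗ ℂ[z_1,…,z_n,h]. Then the assignments y_i ↦ Y_i^+, c ↦ multiplication by h, σ_j ↦ G_{j,j+1} define a representation of the degenerate affine Hecke algebra 𝔥_n; that is: the operators Y_i^+ pairwise commute, the operators G_{j,j+1} satisfy the Coxeter relations of S_n on V_{(1,…,1)} ⊗ ℂ[z_1,…,z_n,h], G_{i,i+1} Y_i^+ − Y_{i+1}^+ G_{i,i+1} = h·id, and G_{i,i+1} Y_j^+ = Y_j^+ G_{i,i+1} for j ≠ i, i+1. Similarly, the assignments y_i ↦ Y_i^−, c ↦ multiplication by −h, σ_j ↦ −G_{j,j+1} define a representation of 𝔥_n: the Y_i^− pairwise commute, (−G_{i,i+1}) Y_i^− − Y_{i+1}^− (−G_{i,i+1}) = −h·id, and G_{i,i+1} Y_j^−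 = Y_j^− G_{i,i+1} for j ≠ i, i+1. -/
open scoped BigOperators

noncomputable section

namespace GRTV

/-- The polynomial ring `ℂ[z_1,…,z_n,h]`. -/
abbrev A (n : ℕ) : Type := MvPolynomial (Fin n ⊕ Unit) ℂ

def zp {n : ℕ} (a : Fin n) : A n := MvPolynomial.X (Sum.inl a)
def hp {n : ℕ} : A n := MvPolynomial.X (Sum.inr ())

/-- `V ⊗ ℂ[z_1,…,z_n,h]` (with `V = (ℂ^n)^{⊗n}`) in coordinates. -/
abbrev MV (n : ℕ) : Type := (Fin n → Fin n) → A n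

/-- The action of `e^{(a)}_{i,j}` (acting in the `a`-th tensor factor) in coordinates. -/
def Ea {n : ℕ} (a : Fin n) (i j : Fin n) (c : MV n) : MV n :=
  fun m => if m a = i then c (Function.update m a j) else 0

/-- The diagonal action of `e_{i,j} = e^{(1)}_{i,j}+⋯+e^{(n)}_{i,j}`. -/
def Eop {n : ℕ} (i j : Fin n) (c : MV n) : MV n :=
  fun m => ∑ a : Fin n, Ea a i j c m

/-- `G_{i,j} = e_{i,j} e_{j,i} − e_{i,i}`. -/
def Gop {n : ℕ} (i j : Fin n) (c : MV n) : MV n :=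
  fun m => Eop i j (Eop j i c) m - Eop i i c m

/-- The dynamical Hamiltonian `Y_i^±` (`ε = true` for `+`, `ε = false` for `−`):
`Y_i^± = Σ_a z_a e^{(a)}_{i,i} + (h/2)(e_{i,i} − e_{i,i}²)
  + h Σ_{j=1}^n Σ_{a<b (resp. b<a)} e^{(a)}_{i,j} e^{(b)}_{j,i} − h Σ_{j<i} G_{i,j}`. -/
def Yop {n : ℕ} (ε : Bool) (i : Fin n) (c : MV n) : MV n :=
  fun m =>
    (∑ a : Fin n, zp a * Ea a i i c m)
    + MvPolynomial.C (1/2 : ℂ) * hp * (Eop i i c m - Eop i i (Eop i i c) m)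
    + hp * (if ε then
        ∑ j : Fin n, ∑ p ∈ Finset.univ.filter (fun p : Fin n × Fin n => p.1 < p.2),
          Ea p.1 i j (Ea p.2 j i c) m
      else
        ∑ j : Fin n, ∑ p ∈ Finset.univ.filter (fun p : Fin n × Fin n => p.2 < p.1),
          Ea p.1 i j (Ea p.2 j i c) m)
    - hp * (∑ j ∈ Finset.univ.filter (fun j : Fin n => j < i), Gop i j c m)

/-- Membership in `V_{(1,…,1)} ⊗ ℂ[z,h]`: support on bijective words. -/
def wsupp {n : ℕ} (c : MV n) : Prop :=
  ∀ m : Fin n → Fin n, ¬ Function.Bijective m → c m = 0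

/-!
On the weight space `V_{(1,…,1)}` a coefficient vector is a function of the words
`σ(1)…σ(n)` with `σ` a permutation. There `e_{i,i}` acts as the identity, `G_{i,j}` acts by
`f ↦ f (s_{ij} σ)` and `Y_i^±` becomes `z_{σ⁻¹ i} + h T_i`, where
`(T_i f) σ = ∑_j γ(i, σ, j) f (s_{ij} σ)` with `γ ∈ {-1, 0, 1}` read off from the relative
order of the labels `i, j` and of their positions `σ⁻¹ i, σ⁻¹ j`.

The Coxeter relations are then relations between transpositions. Conjugating by an adjacent
transposition `s = s_{x,x+1}` turns `T_j` into `T_{s j}`, except for one term in which `s`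
reverses the order of the labels `x < x + 1`; this term produces `h` in the Hecke relation.
The `T_i` commute because, after pairing the terms of the double sum, all that is left is a
three-index identity for `γ` (`γ_triangle`), checked by cases on the relative orders; the
cross terms between the `z`'s and the `T`'s cancel because `γ` is antisymmetric.
-/

open Equiv Finset Function

variable {n : ℕ}

/-- `(Y_i^ε f) σ = z_{σ⁻¹ i} f σ + h ∑_j γ ε i σ j f (s_{ij} σ)` (`Yop_apply_perm`): the first
summand of `γ` comes from `e^{(a)}_{i,j} e^{(b)}_{j,i}` with `a = σ⁻¹ i`, `b = σ⁻¹ j`, the second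
from `-G_{i,j}` for `j < i`. -/
def γ (ε : Bool) (i : Fin n) (σ : Perm (Fin n)) (j : Fin n) : ℤ :=
  (if (if ε then σ⁻¹ i < σ⁻¹ j else σ⁻¹ j < σ⁻¹ i) then 1 else 0) - if j < i then 1 else 0

section Coefficient

variable (ε : Bool) (σ : Perm (Fin n))

lemma γ_self (i : Fin n) : γ ε i σ i = 0 := by
  cases ε <;> simp [γ]

lemma γ_antisymm (i k : Fin n) : γ ε i σ k = -γ ε k σ i := by
  rcases eq_or_ne i k with rfl | hik
  · simp [γ_self]
  have h : σ⁻¹ i ≠ σ⁻¹ k := by simpa using hik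
  cases ε <;> simp only [γ] <;> split_ifs <;> omega

lemma γ_mul_γ_swap_mul_eq_zero {i k : Fin n} (hik : i ≠ k) :
    γ ε i σ k * γ ε k (swap i k * σ) i = 0 := by
  have h : σ⁻¹ i ≠ σ⁻¹ k := by simpa using hik
  cases ε <;> simp only [γ, mul_inv_rev, swap_inv, Perm.mul_apply, swap_apply_left,
    swap_apply_right] <;> split_ifs <;> omega

lemma γ_swap_mul_of_ne {a b i j : Fin n} (hai : a ≠ i) (haj : a ≠ j) (hbi : b ≠ i)
    (hbj : b ≠ j) : γ ε a (swap i j * σ) b = γ ε a σ b := by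
  simp [γ, swap_apply_of_ne_of_ne, hai, haj, hbi, hbj]

lemma γ_triangle {i k r : Fin n} (hik : i ≠ k) (hir : i ≠ r) (hkr : k ≠ r) :
    γ ε i σ r * γ ε k (swap i r * σ) i + γ ε i σ k * γ ε k (swap i k * σ) r
      = γ ε k σ r * γ ε i (swap k r * σ) r := by
  have h₁ : σ⁻¹ i ≠ σ⁻¹ k := by simpa using hik
  have h₂ : σ⁻¹ i ≠ σ⁻¹ r := by simpa using hir
  have h₃ : σ⁻¹ k ≠ σ⁻¹ r := by simpa using hkr
  cases ε <;>
  · simp only [γ, mul_inv_rev, swap_inv, Perm.mul_apply, swap_apply_left, swap_apply_right,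
      swap_apply_of_ne_of_ne hik.symm hkr, swap_apply_of_ne_of_ne hir.symm hkr.symm,
      swap_apply_of_ne_of_ne hik hir]
    split_ifs <;> omega

lemma γ_swap_mul_of_adjacent {x y : Fin n} (hxy : (x : ℕ) + 1 = y) (j l : Fin n) :
    γ ε j (swap x y * σ) (swap x y l) = γ ε (swap x y j) σ l
      + (if j = x ∧ l = x then 1 else 0) - if j = y ∧ l = y then 1 else 0 := by
  have label : (if l < swap x y j then 1 else 0 : ℤ) = (if swap x y l < j then 1 else 0)
      + (if j = x ∧ l = x then 1 else 0) - if j = y ∧ l = y then 1 else 0 := by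
    rw [swap_apply_def, swap_apply_def]
    split_ifs <;> omega
  simp only [γ, mul_inv_rev, swap_inv, Perm.mul_apply, swap_apply_self]
  linear_combination label

end Coefficient

abbrev W (n : ℕ) : Type := Perm (Fin n) → A n

def Zperm (i : Fin n) : W n →ₗ[A n] W n where
  toFun f σ := zp (σ⁻¹ i) * f σ
  map_add' f g := by funext σ; simp [mul_add]
  map_smul' a f := by funext σ; simp [mul_left_comm]

def Tperm (ε : Bool) (i : Fin n) : W n →ₗ[A n] W n where
  toFun f σ := ∑ j, (γ ε i σ j : A n) * f (swap i j * σ)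
  map_add' f g := by funext σ; simp [mul_add, sum_add_distrib]
  map_smul' a f := by funext σ; simp [mul_sum, mul_left_comm]

def Yperm (ε : Bool) (i : Fin n) : Module.End (A n) (W n) := Zperm i + (hp : A n) • Tperm ε i

section PermModel

variable (ε : Bool) (f : W n) (σ : Perm (Fin n))

@[simp] lemma Zperm_apply (i : Fin n) : Zperm i f σ = zp (σ⁻¹ i) * f σ := rfl

@[simp] lemma Tperm_apply (i : Fin n) :
    Tperm ε i f σ = ∑ j, (γ ε i σ j : A n) * f (swap i j * σ) := rfl

lemma Yperm_apply (i : Fin n) : Yperm ε i f σ = zp (σ⁻¹ i) * f σ + hp * Tperm ε i f σ := rfl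

lemma Zperm_mul_comm (i k : Fin n) : Zperm i * Zperm k = Zperm k * Zperm i := by
  refine LinearMap.ext fun f => funext fun σ => ?_
  simp [mul_left_comm]

lemma Zperm_mul_Tperm_sub_apply {i k : Fin n} (hik : i ≠ k) :
    (Zperm i * Tperm ε k - Tperm ε k * Zperm i) f σ
      = γ ε k σ i * (zp (σ⁻¹ i) - zp (σ⁻¹ k)) * f (swap k i * σ) := by
  simp only [LinearMap.sub_apply, Module.End.mul_apply, Pi.sub_apply, Zperm_apply, Tperm_apply,
    mul_sum, ← sum_sub_distrib, mul_inv_rev, swap_inv, Perm.mul_apply]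
  rw [sum_eq_single i]
  · rw [swap_apply_right]; ring
  · intro l _ hli
    rw [swap_apply_of_ne_of_ne hik hli.symm]; ring
  · simp

lemma Zperm_mul_Tperm_sub_comm (i k : Fin n) :
    Zperm i * Tperm ε k - Tperm ε k * Zperm i = Zperm k * Tperm ε i - Tperm ε i * Zperm k := by
  rcases eq_or_ne i k with rfl | hik
  · rfl
  refine LinearMap.ext fun f => funext fun σ => ?_
  rw [Zperm_mul_Tperm_sub_apply ε f σ hik, Zperm_mul_Tperm_sub_apply ε f σ hik.symm,
    γ_antisymm ε σ k i, swap_comm]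
  push_cast
  ring

def Tterm (i k j l : Fin n) : A n :=
  γ ε i σ j * γ ε k (swap i j * σ) l * f (swap k l * (swap i j * σ))

lemma Tperm_mul_apply (i k : Fin n) :
    (Tperm ε i * Tperm ε k) f σ = ∑ j, ∑ l, Tterm ε f σ i k j l := by
  simp only [Module.End.mul_apply, Tperm_apply, Tterm, mul_sum, mul_assoc]

lemma Tterm_comm_of_ne {i k j l : Fin n} (hik : i ≠ k) (hjk : j ≠ k) (hli : l ≠ i)
    (hlj : l ≠ j) : Tterm ε f σ i k j l = Tterm ε f σ k i l j := by
  have hcomm : swap k l * swap i j = swap i j * swap k l := by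
    rw [mul_swap_eq_swap_mul, swap_apply_of_ne_of_ne hik hli.symm,
      swap_apply_of_ne_of_ne hjk hlj.symm]
  have hσ : swap k l * (swap i j * σ) = swap i j * (swap k l * σ) := by
    rw [← mul_assoc, hcomm, mul_assoc]
  rw [Tterm, Tterm, γ_swap_mul_of_ne ε σ hik.symm hjk.symm hli hlj,
    γ_swap_mul_of_ne ε σ hik hli.symm hjk hlj.symm, hσ]
  ring

lemma Tterm_triangle {i k r : Fin n} (hik : i ≠ k) (hir : i ≠ r) (hkr : k ≠ r) :
    Tterm ε f σ i k r i + Tterm ε f σ i k k r = Tterm ε f σ k i r r := by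
  have h₁ : swap k i * swap i r = swap k r * swap k i := by
    rw [mul_swap_eq_swap_mul, swap_apply_right, swap_apply_of_ne_of_ne hkr.symm hir.symm]
  have h₂ : swap i r * swap k r = swap k i * swap i r := by
    rw [mul_swap_eq_swap_mul, swap_apply_of_ne_of_ne hik.symm hkr, swap_apply_right]
  have h₃ : swap k r * swap i k = swap k r * swap k i := by rw [swap_comm i k]
  simp only [Tterm, ← mul_assoc, h₁, h₂, h₃]
  rw [← add_mul]
  congr 1
  exact_mod_cast γ_triangle ε σ hik hir hkr

lemma sum_Tterm_left (i : Fin n) {k : Fin n} : ∑ l, Tterm ε f σ i k i l = 0 :=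
  sum_eq_zero fun l _ => by simp [Tterm, γ_self]

lemma sum_Tterm_right {i k : Fin n} (hik : i ≠ k) :
    ∑ l, Tterm ε f σ i k k l = ∑ l ∈ {i, k}ᶜ, Tterm ε f σ i k k l := by
  have hzero : Tterm ε f σ i k k i = 0 := by
    simp only [Tterm, ← Int.cast_mul, γ_mul_γ_swap_mul_eq_zero ε σ hik, Int.cast_zero, zero_mul]
  rw [← sum_add_sum_compl {i, k}, sum_pair hik, hzero]
  simp [Tterm, γ_self]

lemma sum_Tterm_of_ne {i k j : Fin n} (hik : i ≠ k) (hji : j ≠ i) (hjk : j ≠ k) :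
    ∑ l, Tterm ε f σ i k j l
      = Tterm ε f σ i k j i + Tterm ε f σ i k j j + ∑ l ∈ {i, k, j}ᶜ, Tterm ε f σ i k j l := by
  have hzero : Tterm ε f σ i k j k = 0 := by simp [Tterm, γ_self]
  rw [← sum_add_sum_compl {i, k, j}, sum_insert (by simp [hik, hji.symm]),
    sum_pair hjk.symm, hzero]
  ring

lemma sum_sum_Tterm {i k : Fin n} (hik : i ≠ k) :
    ∑ j, ∑ l, Tterm ε f σ i k j l
      = ∑ r ∈ {i, k}ᶜ, (Tterm ε f σ i k r r + Tterm ε f σ k i r r)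
        + ∑ r ∈ {i, k}ᶜ, ∑ l ∈ {i, k, r}ᶜ, Tterm ε f σ i k r l := by
  rw [← sum_add_sum_compl {i, k}, sum_pair hik, sum_Tterm_left, sum_Tterm_right ε f σ hik,
    zero_add, ← sum_add_distrib, ← sum_add_distrib]
  refine sum_congr rfl fun r hr => ?_
  have hri : r ≠ i := by rintro rfl; simp at hr
  have hrk : r ≠ k := by rintro rfl; simp at hr
  rw [sum_Tterm_of_ne ε f σ hik hri hrk, ← Tterm_triangle ε f σ hik hri.symm hrk.symm]
  ring

lemma Tperm_mul_comm (i k : Fin n) : Tperm ε i * Tperm ε k = Tperm ε k * Tperm ε i := by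
  rcases eq_or_ne i k with rfl | hik
  · rfl
  refine LinearMap.ext fun f => funext fun σ => ?_
  rw [Tperm_mul_apply, Tperm_mul_apply, sum_sum_Tterm ε f σ hik, sum_sum_Tterm ε f σ hik.symm,
    pair_comm k i]
  refine congrArg₂ (· + ·) (sum_congr rfl fun r _ => add_comm _ _) ?_
  calc ∑ r ∈ {i, k}ᶜ, ∑ l ∈ {i, k, r}ᶜ, Tterm ε f σ i k r l
      = ∑ r ∈ {i, k}ᶜ, ∑ l ∈ {i, k, r}ᶜ, Tterm ε f σ k i l r :=
        sum_congr rfl fun r hr => sum_congr rfl fun l hl => by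
          simp only [mem_compl, mem_insert, mem_singleton, not_or] at hr hl
          exact Tterm_comm_of_ne ε f σ hik hr.2 hl.1 hl.2.2
    _ = ∑ l ∈ {i, k}ᶜ, ∑ r ∈ {k, i, l}ᶜ, Tterm ε f σ k i l r :=
        sum_comm' fun r l => by simp only [mem_compl, mem_insert, mem_singleton]; tauto

lemma Yperm_mul_comm (i k : Fin n) : Yperm ε i * Yperm ε k = Yperm ε k * Yperm ε i := by
  have hZT := congrArg ((hp : A n) • ·) (Zperm_mul_Tperm_sub_comm ε i k)
  simp only [Yperm, add_mul, mul_add, smul_mul_assoc, mul_smul_comm,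
    Zperm_mul_comm i k, Tperm_mul_comm ε i k]
  linear_combination (norm := module) hZT

lemma Zperm_apply_swap_mul (j x y : Fin n) :
    Zperm j f (swap x y * σ) = Zperm (swap x y j) (fun τ => f (swap x y * τ)) σ := by
  simp [mul_inv_rev]

lemma Tperm_apply_swap_mul {x y : Fin n} (hxy : (x : ℕ) + 1 = y) (j : Fin n) :
    Tperm ε j f (swap x y * σ) = Tperm ε (swap x y j) (fun τ => f (swap x y * τ)) σ
      + ((if j = x then 1 else 0) - if j = y then 1 else 0) * f σ := by
  have hσ : ∀ l, swap j (swap x y l) * (swap x y * σ)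
      = swap x y * (swap (swap x y j) l * σ) := fun l => by
    rw [← mul_assoc, ← mul_assoc, mul_swap_eq_swap_mul (swap x y), swap_apply_self]
  rw [Tperm_apply, ← Equiv.sum_comp (swap x y)]
  simp only [γ_swap_mul_of_adjacent ε σ hxy, hσ, Tperm_apply]
  push_cast
  simp only [add_mul, sub_mul, sum_add_distrib, sum_sub_distrib, ite_and, ite_mul, one_mul,
    zero_mul, sum_ite_irrel, sum_ite_eq', mem_univ, if_true, sum_const_zero, add_sub_assoc]
  split_ifs <;> subst_vars <;> first | omega | simp [swap_comm _ j]

lemma Yperm_apply_swap_mul {x y : Fin n} (hxy : (x : ℕ) + 1 = y) (j : Fin n) :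
    Yperm ε j f (swap x y * σ) = Yperm ε (swap x y j) (fun τ => f (swap x y * τ)) σ
      + hp * ((if j = x then 1 else 0) - if j = y then 1 else 0) * f σ := by
  rw [Yperm_apply, Yperm_apply, Tperm_apply_swap_mul ε f σ hxy, ← Zperm_apply,
    Zperm_apply_swap_mul, Zperm_apply]
  ring

end PermModel

section Coordinates

variable {c : MV n}

def toW (c : MV n) : W n := fun σ => c σ

lemma Ea_self_apply {a i : Fin n} (m : Fin n → Fin n) :
    Ea a i i c m = if m a = i then c m else 0 := by
  unfold Ea
  split_ifs with h
  · rw [← h, update_eq_self]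
  · rfl

lemma Ea_Ea_self_apply {a i j : Fin n} (m : Fin n → Fin n) :
    Ea a i j (Ea a j i c) m = Ea a i i c m := by
  simp [Ea]

lemma Ea_Ea_apply {a b i j : Fin n} (hab : a ≠ b) (m : Fin n → Fin n) :
    Ea a i j (Ea b j i c) m = if m a = i ∧ m b = j then c (m ∘ swap a b) else 0 := by
  simp only [Ea, update_of_ne hab.symm, ite_and]
  split_ifs with ha hb
  · rw [comp_swap_eq_update, ha, hb, update_comm hab]
  · rfl
  · rfl

lemma Ea_Eop_apply (a i j k l : Fin n) (m : Fin n → Fin n) :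
    Ea a i j (Eop k l c) m = ∑ b, Ea a i j (Ea b k l c) m := by
  simp only [Ea, Eop]
  split_ifs <;> simp

lemma Eop_self_apply (i : Fin n) (m : Fin n → Fin n) :
    Eop i i c m = ∑ a, if m a = i then c m else 0 := by
  simp [Eop, Ea_self_apply]

lemma Eop_self_apply_perm (i : Fin n) (σ : Perm (Fin n)) : Eop i i c σ = c σ := by
  simp [Eop_self_apply, ← Perm.eq_inv_iff_eq]

lemma Gop_apply (i j : Fin n) (m : Fin n → Fin n) :
    Gop i j c m = ∑ p ∈ univ.filter (fun p : Fin n × Fin n => p.1 ≠ p.2),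
      Ea p.1 i j (Ea p.2 j i c) m := by
  have hdiag : ∑ p ∈ univ.filter (fun p : Fin n × Fin n => ¬p.1 ≠ p.2),
      Ea p.1 i j (Ea p.2 j i c) m = Eop i i c m := by
    simp [sum_filter, Fintype.sum_prod_type, Eop, Ea_Ea_self_apply]
  rw [Gop, Eop, ← hdiag, sub_eq_iff_eq_add, sum_filter_add_sum_filter_not]
  simp only [Ea_Eop_apply, Fintype.sum_prod_type]

lemma sum_Ea_Ea_apply_perm {i j : Fin n} (s : Finset (Fin n × Fin n))
    (hs : ∀ p ∈ s, p.1 ≠ p.2) (σ : Perm (Fin n)) :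
    ∑ p ∈ s, Ea p.1 i j (Ea p.2 j i c) σ
      = if (σ⁻¹ i, σ⁻¹ j) ∈ s then c ⇑(swap i j * σ) else 0 := by
  have hterm : ∀ p ∈ s, Ea p.1 i j (Ea p.2 j i c) σ
      = if (σ⁻¹ i, σ⁻¹ j) = p then c ⇑(swap i j * σ) else 0 := by
    rintro ⟨a, b⟩ hp
    rw [Ea_Ea_apply (hs _ hp)]
    by_cases h : σ a = i ∧ σ b = j
    · obtain ⟨rfl, rfl⟩ := h
      simp [← Perm.coe_mul, mul_swap_eq_swap_mul]
    · rw [if_neg h, if_neg]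
      rintro ⟨⟩
      simp at h
  rw [sum_congr rfl hterm, sum_ite_eq]

lemma sum_Ea_Ea_apply_of_not_bijective {i j : Fin n} (hc : wsupp c) {m : Fin n → Fin n}
    (hm : ¬ Bijective m) (s : Finset (Fin n × Fin n)) (hs : ∀ p ∈ s, p.1 ≠ p.2) :
    ∑ p ∈ s, Ea p.1 i j (Ea p.2 j i c) m = 0 := by
  refine sum_eq_zero fun p hp => ?_
  rw [Ea_Ea_apply (hs p hp)]
  split_ifs
  · exact hc _ fun h => hm ((Bijective.of_comp_iff m (swap p.1 p.2).bijective).mp h)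
  · rfl

lemma Gop_apply_perm {i j : Fin n} (hij : i ≠ j) (σ : Perm (Fin n)) :
    Gop i j c σ = c ⇑(swap i j * σ) := by
  rw [Gop_apply, sum_Ea_Ea_apply_perm _ (fun p hp => (mem_filter.mp hp).2), if_pos]
  simpa using hij

lemma wsupp_Gop (i j : Fin n) (hc : wsupp c) : wsupp (Gop i j c) := fun m hm => by
  rw [Gop_apply, sum_Ea_Ea_apply_of_not_bijective hc hm _ (fun p hp => (mem_filter.mp hp).2)]

lemma toW_Gop {i j : Fin n} (hij : i ≠ j) : toW (Gop i j c) = fun τ => toW c (swap i j * τ) :=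
  funext (Gop_apply_perm hij)

lemma Yop_apply_perm (ε : Bool) (i : Fin n) (σ : Perm (Fin n)) :
    Yop ε i c σ = Yperm ε i (toW c) σ := by
  have hz : ∑ a, zp a * Ea a i i c σ = zp (σ⁻¹ i) * c σ := by
    simp [Ea_self_apply, ← Perm.eq_inv_iff_eq]
  have hE : Eop i i c σ - Eop i i (Eop i i c) σ = 0 := by
    simp only [Eop_self_apply_perm, sub_self]
  have hlt : ∀ j, ∑ p ∈ univ.filter (fun p : Fin n × Fin n => p.1 < p.2),
      Ea p.1 i j (Ea p.2 j i c) σ = if σ⁻¹ i < σ⁻¹ j then c ⇑(swap i j * σ) else 0 := fun j => by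
    rw [sum_Ea_Ea_apply_perm _ fun p hp => ne_of_lt (mem_filter.mp hp).2]
    simp
  have hgt : ∀ j, ∑ p ∈ univ.filter (fun p : Fin n × Fin n => p.2 < p.1),
      Ea p.1 i j (Ea p.2 j i c) σ = if σ⁻¹ j < σ⁻¹ i then c ⇑(swap i j * σ) else 0 := fun j => by
    rw [sum_Ea_Ea_apply_perm _ fun p hp => ne_of_gt (mem_filter.mp hp).2]
    simp
  have hG : ∑ j ∈ univ.filter (· < i), Gop i j c σ
      = ∑ j ∈ univ.filter (· < i), c ⇑(swap i j * σ) :=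
    sum_congr rfl fun j hj => Gop_apply_perm (mem_filter.mp hj).2.ne' σ
  rw [Yperm_apply, Tperm_apply, Yop]
  simp only [hz, hE, hG, mul_zero, add_zero]
  cases ε <;> simp [hlt, hgt, γ, sum_filter, sub_mul, sum_sub_distrib, toW, mul_sub] <;> ring

lemma toW_Yop (ε : Bool) (i : Fin n) : toW (Yop ε i c) = Yperm ε i (toW c) :=
  funext (Yop_apply_perm ε i)

lemma wsupp_Yop (ε : Bool) (i : Fin n) (hc : wsupp c) : wsupp (Yop ε i c) := by
  intro m hm
  have hcm : c m = 0 := hc m hm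
  have hE : Eop i i c m = 0 := by simp [Eop_self_apply, hcm]
  have hlt : ∀ j, ∑ p ∈ univ.filter (fun p : Fin n × Fin n => p.1 < p.2),
      Ea p.1 i j (Ea p.2 j i c) m = 0 := fun j =>
    sum_Ea_Ea_apply_of_not_bijective hc hm _ fun p hp => ne_of_lt (mem_filter.mp hp).2
  have hgt : ∀ j, ∑ p ∈ univ.filter (fun p : Fin n × Fin n => p.2 < p.1),
      Ea p.1 i j (Ea p.2 j i c) m = 0 := fun j =>
    sum_Ea_Ea_apply_of_not_bijective hc hm _ fun p hp => ne_of_gt (mem_filter.mp hp).2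
  cases ε <;> simp [Yop, Ea_self_apply, hcm, hE, Eop_self_apply, hlt, hgt, wsupp_Gop i _ hc m hm]

end Coordinates

section Relations

variable {c : MV n}

lemma eq_of_wsupp {d : MV n} (hc : wsupp c) (hd : wsupp d)
    (h : ∀ σ : Perm (Fin n), c σ = d σ) : c = d := by
  funext m
  by_cases hm : Bijective m
  · exact h (Equiv.ofBijective m hm)
  · rw [hc m hm, hd m hm]

lemma Yop_neg (ε : Bool) (i : Fin n) (hc : wsupp c) :
    Yop ε i (fun m => -c m) = fun m => -Yop ε i c m :=
  eq_of_wsupp (wsupp_Yop ε i fun m hm => by simp [hc m hm])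
    (fun m hm => by simp [wsupp_Yop ε i hc m hm]) fun σ => by
      rw [Yop_apply_perm, Yop_apply_perm]
      exact map_neg (Yperm ε i) (toW c) ▸ rfl

lemma Yop_comm (ε : Bool) (i j : Fin n) (hc : wsupp c) :
    Yop ε i (Yop ε j c) = Yop ε j (Yop ε i c) :=
  eq_of_wsupp (wsupp_Yop ε i (wsupp_Yop ε j hc)) (wsupp_Yop ε j (wsupp_Yop ε i hc)) fun σ => by
    rw [Yop_apply_perm, Yop_apply_perm, toW_Yop, toW_Yop, ← Module.End.mul_apply,
      Yperm_mul_comm, Module.End.mul_apply]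

lemma Gop_Gop_self {i j : Fin n} (hij : i ≠ j) (hc : wsupp c) : Gop i j (Gop i j c) = c :=
  eq_of_wsupp (wsupp_Gop i j (wsupp_Gop i j hc)) hc fun σ => by
    rw [Gop_apply_perm hij, Gop_apply_perm hij, swap_mul_self_mul]

lemma Gop_comm_of_ne {i j k l : Fin n} (hij : i ≠ j) (hkl : k ≠ l) (hik : i ≠ k) (hil : i ≠ l)
    (hjk : j ≠ k) (hjl : j ≠ l) (hc : wsupp c) : Gop i j (Gop k l c) = Gop k l (Gop i j c) :=
  eq_of_wsupp (wsupp_Gop i j (wsupp_Gop k l hc)) (wsupp_Gop k l (wsupp_Gop i j hc)) fun σ => by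
    rw [Gop_apply_perm hij, Gop_apply_perm hkl, Gop_apply_perm hkl, Gop_apply_perm hij,
      ← mul_assoc, ← mul_assoc, mul_swap_eq_swap_mul, swap_apply_of_ne_of_ne hik hil,
      swap_apply_of_ne_of_ne hjk hjl]

lemma Gop_braid {x y z : Fin n} (hxy : x ≠ y) (hxz : x ≠ z) (hyz : y ≠ z) (hc : wsupp c) :
    Gop x y (Gop y z (Gop x y c)) = Gop y z (Gop x y (Gop y z c)) :=
  eq_of_wsupp (wsupp_Gop x y (wsupp_Gop y z (wsupp_Gop x y hc)))
    (wsupp_Gop y z (wsupp_Gop x y (wsupp_Gop y z hc))) fun σ => by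
      have hswap : swap x y * swap y z * swap x y = swap y z * swap x y * swap y z := by
        rw [swap_mul_swap_mul_swap hxy hxz, swap_comm x y, swap_comm y z,
          swap_mul_swap_mul_swap hyz.symm hxz.symm, swap_comm]
      simp only [Gop_apply_perm hxy, Gop_apply_perm hyz, ← mul_assoc, hswap]

lemma Gop_Yop_sub_Yop_Gop (ε : Bool) {x y : Fin n} (hxy : (x : ℕ) + 1 = y) (hc : wsupp c) :
    (fun m => Gop x y (Yop ε x c) m - Yop ε y (Gop x y c) m) = fun m => hp * c m := by
  have hne : x ≠ y := Fin.ne_of_val_ne (by omega)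
  refine eq_of_wsupp (fun m hm => ?_) (fun m hm => by simp only [hc m hm, mul_zero]) fun σ => ?_
  · simp only [wsupp_Gop x y (wsupp_Yop ε x hc) m hm, wsupp_Yop ε y (wsupp_Gop x y hc) m hm,
      sub_zero]
  · rw [Gop_apply_perm hne, Yop_apply_perm, Yop_apply_perm, Yperm_apply_swap_mul ε _ σ hxy,
      toW_Gop hne, swap_apply_left]
    simp [hne, toW]

lemma Gop_Yop_comm (ε : Bool) {x y j : Fin n} (hxy : (x : ℕ) + 1 = y) (hjx : j ≠ x)
    (hjy : j ≠ y) (hc : wsupp c) : Gop x y (Yop ε j c) = Yop ε j (Gop x y c) := by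
  have hne : x ≠ y := Fin.ne_of_val_ne (by omega)
  refine eq_of_wsupp (wsupp_Gop x y (wsupp_Yop ε j hc)) (wsupp_Yop ε j (wsupp_Gop x y hc))
    fun σ => ?_
  rw [Gop_apply_perm hne, Yop_apply_perm, Yop_apply_perm, Yperm_apply_swap_mul ε _ σ hxy,
    toW_Gop hne, swap_apply_of_ne_of_ne hjx hjy]
  simp [hjx, hjy]

end Relations

/-- on `V_{(1,…,1)} ⊗ ℂ[z_1,…,z_n,h]`, the assignments
`y_i ↦ Y_i^+`, `c ↦ h`, `σ_j ↦ G_{j,j+1}` (resp. `y_i ↦ Y_i^−`, `c ↦ −h`,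
`σ_j ↦ −G_{j,j+1}`) define representations of the degenerate affine Hecke algebra. -/
theorem statement16 (n : ℕ) :
    -- the operators Y_i^± pairwise commute
    (∀ (ε : Bool) (i j : Fin n) (c : MV n), wsupp c →
      Yop ε i (Yop ε j c) = Yop ε j (Yop ε i c)) ∧
    -- Coxeter relations for the G_{j,j+1}: involutivity
    (∀ (i : ℕ) (hi : i + 1 < n) (c : MV n), wsupp c →
      Gop (fin1 i hi) (fin2 i hi) (Gop (fin1 i hi) (fin2 i hi) c) = c) ∧
    -- Coxeter relations: far commutation
    (∀ (i j : ℕ) (hi : i + 1 < n) (hj : j + 1 < n), i + 1 < j →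
      ∀ c : MV n, wsupp c →
        Gop (fin1 i hi) (fin2 i hi) (Gop (fin1 j hj) (fin2 j hj) c) =
          Gop (fin1 j hj) (fin2 j hj) (Gop (fin1 i hi) (fin2 i hi) c)) ∧
    -- Coxeter relations: braid relation
    (∀ (i : ℕ) (hi : i + 1 < n) (hi2 : i + 1 + 1 < n) (c : MV n), wsupp c →
      Gop (fin1 i hi) (fin2 i hi)
          (Gop (fin1 (i+1) hi2) (fin2 (i+1) hi2) (Gop (fin1 i hi) (fin2 i hi) c)) =
        Gop (fin1 (i+1) hi2) (fin2 (i+1) hi2)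
          (Gop (fin1 i hi) (fin2 i hi) (Gop (fin1 (i+1) hi2) (fin2 (i+1) hi2) c))) ∧
    -- Hecke relation for the `+` case: G_{i,i+1} Y_i^+ − Y_{i+1}^+ G_{i,i+1} = h
    (∀ (i : ℕ) (hi : i + 1 < n) (c : MV n), wsupp c →
      (fun m => Gop (fin1 i hi) (fin2 i hi) (Yop true (fin1 i hi) c) m
          - Yop true (fin2 i hi) (Gop (fin1 i hi) (fin2 i hi) c) m) =
        fun m => hp * c m) ∧
    -- `+` case: G_{i,i+1} Y_j^+ = Y_j^+ G_{i,i+1} for j ≠ i, i+1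
    (∀ (i : ℕ) (hi : i + 1 < n) (j : Fin n), (j : ℕ) ≠ i → (j : ℕ) ≠ i + 1 →
      ∀ c : MV n, wsupp c →
        Gop (fin1 i hi) (fin2 i hi) (Yop true j c) =
          Yop true j (Gop (fin1 i hi) (fin2 i hi) c)) ∧
    -- Hecke relation for the `−` case: (−G_{i,i+1}) Y_i^− − Y_{i+1}^− (−G_{i,i+1}) = −h
    (∀ (i : ℕ) (hi : i + 1 < n) (c : MV n), wsupp c →
      (fun m => -(Gop (fin1 i hi) (fin2 i hi) (Yop false (fin1 i hi) c) m)
          - Yop false (fin2 i hi) (fun m' => -(Gop (fin1 i hi) (fin2 i hi) c m')) m) =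
        fun m => -(hp * c m)) ∧
    -- `−` case: G_{i,i+1} Y_j^− = Y_j^− G_{i,i+1} for j ≠ i, i+1
    (∀ (i : ℕ) (hi : i + 1 < n) (j : Fin n), (j : ℕ) ≠ i → (j : ℕ) ≠ i + 1 →
      ∀ c : MV n, wsupp c →
        Gop (fin1 i hi) (fin2 i hi) (Yop false j c) =
          Yop false j (Gop (fin1 i hi) (fin2 i hi) c)) := by
  have adj : ∀ i (hi : i + 1 < n), (fin1 i hi : ℕ) + 1 = fin2 i hi := fun _ _ => rfl
  refine ⟨fun ε i j c hc => Yop_comm ε i j hc,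
    fun i hi c hc => Gop_Gop_self ?_ hc,
    fun i j hi hj hij c hc => Gop_comm_of_ne ?_ ?_ ?_ ?_ ?_ ?_ hc,
    fun i hi hi2 c hc => Gop_braid ?_ ?_ ?_ hc,
    fun i hi c hc => Gop_Yop_sub_Yop_Gop true (adj i hi) hc,
    fun i hi j hji hji' c hc =>
      Gop_Yop_comm true (adj i hi) (Fin.ne_of_val_ne hji) (Fin.ne_of_val_ne hji') hc,
    fun i hi c hc => ?minus,
    fun i hi j hji hji' c hc =>
      Gop_Yop_comm false (adj i hi) (Fin.ne_of_val_ne hji) (Fin.ne_of_val_ne hji') hc⟩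
  case minus =>
    funext m
    have hecke := congrFun (Gop_Yop_sub_Yop_Gop false (adj i hi) hc) m
    rw [Yop_neg false _ (wsupp_Gop _ _ hc)]
    linear_combination -hecke
  all_goals exact Fin.ne_of_val_ne (by dsimp [fin1, fin2]; omega)

end GRTV
end
end

section
/- Let κ_1,…,κ_n be pairwise distinct. Then the discrete Wronskian factors as W^κ(u) = det(u·1 − C) · ∏_{1≤i<j≤n}(κ_i − κ_j), where C is the trigonometric Calogero–Moser matrix. -/
open scoped BigOperators

noncomputable section

namespace GRTV

/-- The discrete Wronskian `W^κ(u) = det( κ_i^{n−j} (u − x_i + h(i−j)) )_{i,j=1}^n`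
(indices written `0`-based, so the exponent `n−j` becomes `n−1−j`). -/
def Wmat (n : ℕ) (κ x : Fin n → ℂ) (h u : ℂ) : Matrix (Fin n) (Fin n) ℂ :=
  Matrix.of fun i j =>
    κ i ^ (n - 1 - (j : ℕ)) * (u - x i + h * (((i : ℕ) : ℂ) - ((j : ℕ) : ℂ)))

/-- The trigonometric Calogero–Moser matrix `C`. -/
def CM (n : ℕ) (κ x : Fin n → ℂ) (h : ℂ) : Matrix (Fin n) (Fin n) ℂ :=
  Matrix.of fun i j =>
    if i = j then
      x i - h * (∑ k ∈ Finset.univ.filter (fun k : Fin n => k < i), κ i / (κ i - κ k))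
          - h * (∑ k ∈ Finset.univ.filter (fun k : Fin n => i < k), κ k / (κ i - κ k))
    else h * κ i / (κ i - κ j)

end GRTV

/-!
Since `X d/dX` multiplies `X ^ m` by `m`, and `D i k = ℓ_k'(κ i)` is the matrix of differentiation
of polynomials of degree `< n` in the Lagrange basis at the nodes `κ`, the Wronskian factors as
`W = (u - G) V` with `V i j = κ i ^ (n - 1 - j)` and `G = diag (x i + h (n - 1 - i)) - h diag κ D`.
The explicit values `ℓ_j'(κ i) = w_j / (w_i (κ i - κ j))` for `i ≠ j` (`w` the barycentric
weights) give `G diag e = diag e Cᵀ` with `e i = κ i / w i`, hence `det (u - G) = det (u - C)`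
when no `κ i` vanishes. If `κ i₀ = 0`, row `i₀` of both `u - G` and `u - C` is zero off the
diagonal, and the same conjugation identifies the complementary minors.
-/

open Finset Polynomial Lagrange

namespace Lagrange

variable {F ι : Type*} [Field F] [DecidableEq ι] {s : Finset ι} {v : ι → F} {i j : ι}

theorem basis_eq_C_nodalWeight_mul_nodal_erase (hi : i ∈ s) :
    Lagrange.basis s v i = C (nodalWeight s v i) * nodal (s.erase i) v := by
  rw [basis_eq_prod_sub_inv_mul_nodal_div hi, nodal_erase_eq_nodal_div hi]

theorem sub_mul_eval_nodal_erase_erase (hj : j ∈ s.erase i) :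
    (v i - v j) * eval (v i) (nodal ((s.erase i).erase j) v) = (nodalWeight s v i)⁻¹ := by
  rw [nodalWeight_eq_eval_nodal_erase_inv, inv_inv, nodal_eq_mul_nodal_erase hj, eval_mul]
  simp

theorem eval_derivative_basis_self (hvs : Set.InjOn v s) (hi : i ∈ s) :
    eval (v i) (derivative (Lagrange.basis s v i)) = ∑ j ∈ s.erase i, (v i - v j)⁻¹ := by
  rw [basis_eq_C_nodalWeight_mul_nodal_erase hi, derivative_C_mul, derivative_nodal, eval_mul,
    eval_C, eval_finsetSum, mul_sum]
  refine sum_congr rfl fun j hj => ?_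
  have hij : v i - v j ≠ 0 := sub_ne_zero.mpr fun e =>
    (mem_erase.mp hj).1 (hvs (mem_of_mem_erase hj) hi e.symm)
  have hw := nodalWeight_ne_zero hvs hi
  have key := sub_mul_eval_nodal_erase_erase (v := v) hj
  field_simp
  linear_combination nodalWeight s v i * key + mul_inv_cancel₀ hw

theorem sub_mul_eval_derivative_basis_of_ne (hi : i ∈ s) (hj : j ∈ s) (hij : i ≠ j) :
    (v i - v j) * eval (v i) (derivative (Lagrange.basis s v j)) =
      nodalWeight s v j / nodalWeight s v i := by
  rw [basis_eq_C_nodalWeight_mul_nodal_erase hj, derivative_C_mul, eval_mul, eval_C,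
    eval_nodal_derivative_eval_node_eq (mem_erase.mpr ⟨hij, hi⟩), erase_right_comm,
    mul_left_comm, sub_mul_eval_nodal_erase_erase (mem_erase.mpr ⟨hij.symm, hj⟩),
    div_eq_mul_inv]

theorem eval_derivative_eq_sum (hvs : Set.InjOn v s) {p : F[X]} (hp : p.degree < #s) (x : F) :
    eval x (derivative p) = ∑ j ∈ s, p.eval (v j) * eval x (derivative (Lagrange.basis s v j)) := by
  conv_lhs => rw [eq_interpolate hvs hp, interpolate_apply]
  simp [eval_finsetSum]

theorem mul_sum_pow_mul_eval_derivative_basis (hvs : Set.InjOn v s) {m : ℕ} (hm : m < #s)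
    (x : F) : x * ∑ k ∈ s, v k ^ m * eval x (derivative (Lagrange.basis s v k)) = m * x ^ m := by
  have hdeg : (X ^ m : F[X]).degree < #s := by
    simpa using hm
  have hd := eval_derivative_eq_sum hvs hdeg x
  simp only [derivative_X_pow, eval_mul, eval_C, eval_pow, eval_X] at hd
  rw [← hd]
  rcases m with _ | m
  · simp
  · rw [Nat.add_sub_cancel, pow_succ]
    ring

end Lagrange

namespace Matrix

variable {K : Type*} [Field K]

theorem det_eq_of_mul_eq_mul_transpose {ι : Type*} [Fintype ι] [DecidableEq ι]
    {A B : Matrix ι ι K} {e : ι → K} (he : ∀ i, e i ≠ 0)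
    (hAB : ∀ i j, A i j * e j = e i * B j i) : A.det = B.det := by
  have hconj : A * diagonal e = diagonal e * Bᵀ := by
    ext i j
    rw [mul_diagonal, diagonal_mul, transpose_apply, hAB]
  have hdet := congrArg det hconj
  rw [det_mul, det_mul, det_diagonal, det_transpose, mul_comm] at hdet
  exact mul_left_cancel₀ (prod_ne_zero_iff.mpr fun i _ => he i) hdet

theorem det_eq_of_mul_eq_mul_transpose_of_eq_zero {m : ℕ}
    {A B : Matrix (Fin (m + 1)) (Fin (m + 1)) K} {e : Fin (m + 1) → K} {i₀ : Fin (m + 1)}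
    (he₀ : e i₀ = 0) (he : ∀ i ≠ i₀, e i ≠ 0)
    (hdiag : A i₀ i₀ = B i₀ i₀) (hAB : ∀ i j, A i j * e j = e i * B j i) : A.det = B.det := by
  have hA : ∀ j ≠ i₀, A i₀ j = 0 := fun j hj => by
    simpa [he₀, he j hj] using hAB i₀ j
  have hB : ∀ j ≠ i₀, B i₀ j = 0 := fun j hj => by
    simpa [he₀, he j hj] using (hAB j i₀).symm
  have hminor : (A.submatrix i₀.succAbove i₀.succAbove).det =
      (B.submatrix i₀.succAbove i₀.succAbove).det :=
    det_eq_of_mul_eq_mul_transpose (fun k => he _ (Fin.succAbove_ne i₀ k)) fun k l => hAB _ _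
  rw [det_succ_row A i₀, det_succ_row B i₀,
    sum_eq_single i₀ (fun j _ hj => by rw [hA j hj]; ring) (by simp),
    sum_eq_single i₀ (fun j _ hj => by rw [hB j hj]; ring) (by simp), hdiag, hminor]

end Matrix

namespace GRTV

open Matrix

variable {n : ℕ} {κ : Fin n → ℂ}

/-- The matrix `G`, conjugate to `Cᵀ`. -/
def lagrangeCM (κ x : Fin n → ℂ) (h : ℂ) : Matrix (Fin n) (Fin n) ℂ :=
  of fun i k => (if i = k then x i + h * (i.rev : ℕ) else 0) -
    h * κ i * eval (κ i) (derivative (Lagrange.basis univ κ k))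

theorem Wmat_eq_mul_projVandermonde (hκ : Function.Injective κ) (x : Fin n → ℂ) (h u : ℂ) :
    Wmat n κ x h u = (u • (1 : Matrix (Fin n) (Fin n) ℂ) - lagrangeCM κ x h) *
      projVandermonde 1 κ := by
  ext i j
  have hsum := mul_sum_pow_mul_eval_derivative_basis (s := univ) (m := j.rev) hκ.injOn
    (by simpa using j.rev.isLt) (κ i)
  have hexp : n - 1 - (j : ℕ) = j.rev := by rw [Fin.val_rev]; omega
  have hrev (k : Fin n) : ((k.rev : ℕ) : ℂ) + k + 1 = n := by
    rw [Fin.val_rev]; norm_cast; omega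
  rw [sub_mul, smul_mul, Matrix.one_mul, Matrix.sub_apply, Matrix.smul_apply, mul_apply]
  simp only [Wmat, lagrangeCM, of_apply, projVandermonde_apply, Pi.one_apply, one_pow, one_mul,
    sub_mul, sum_sub_distrib, ite_mul, zero_mul, sum_ite_eq, mem_univ, if_true, smul_eq_mul, hexp]
  have hderiv : ∑ k, h * κ i * eval (κ i) (derivative (Lagrange.basis univ κ k)) *
      κ k ^ (j.rev : ℕ) = h * (j.rev * κ i ^ (j.rev : ℕ)) := by
    rw [← hsum, mul_sum, mul_sum]
    exact sum_congr rfl fun k _ => by ring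
  rw [hderiv]
  linear_combination (h * κ i ^ (j.rev : ℕ)) * (hrev i - hrev j)

theorem det_projVandermonde_one_left (κ : Fin n → ℂ) :
    (projVandermonde 1 κ).det =
      ∏ p ∈ univ.filter (fun p : Fin n × Fin n => p.1 < p.2), (κ p.1 - κ p.2) := by
  rw [det_projVandermonde, prod_filter, Fintype.prod_prod_type]
  refine prod_congr rfl fun i _ => ?_
  rw [← prod_filter]
  simp [filter_lt_eq_Ioi]

theorem lagrangeCM_self (hκ : Function.Injective κ) (x : Fin n → ℂ) (h : ℂ) (i : Fin n) :
    lagrangeCM κ x h i i = CM n κ x h i i := by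
  have hne {k : Fin n} (hk : k ≠ i) : κ i - κ k ≠ 0 := sub_ne_zero.mpr (hκ.ne hk.symm)
  have hsplit : ∑ k ∈ univ.erase i, (κ i - κ k)⁻¹ =
      ∑ k ∈ univ.filter (· < i), (κ i - κ k)⁻¹ + ∑ k ∈ univ.filter (i < ·), (κ i - κ k)⁻¹ := by
    rw [← sum_filter_add_sum_filter_not (univ.erase i) (· < i)]
    congr 1 <;> congr 1 <;> ext k <;> simp <;> grind
  have hgt : ∑ k ∈ univ.filter (i < ·), κ k / (κ i - κ k) =
      κ i * ∑ k ∈ univ.filter (i < ·), (κ i - κ k)⁻¹ - (i.rev : ℕ) := by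
    have hcard : #(univ.filter (i < ·)) = (i.rev : ℕ) := by
      rw [filter_lt_eq_Ioi, Fin.card_Ioi, Fin.val_rev]; omega
    rw [mul_sum, ← hcard, ← nsmul_one, ← sum_const, ← sum_sub_distrib]
    refine sum_congr rfl fun k hk => ?_
    have := hne (mem_filter.mp hk).2.ne'
    field_simp
    ring
  have hlt : ∑ k ∈ univ.filter (· < i), κ i / (κ i - κ k) =
      κ i * ∑ k ∈ univ.filter (· < i), (κ i - κ k)⁻¹ := by
    simp only [mul_sum, div_eq_mul_inv]
  simp only [lagrangeCM, CM, of_apply, if_true, eval_derivative_basis_self hκ.injOn (mem_univ i),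
    hsplit, hgt, hlt]
  ring

theorem lagrangeCM_mul_eq_mul_CM (hκ : Function.Injective κ) (x : Fin n → ℂ) (h : ℂ)
    (i j : Fin n) :
    lagrangeCM κ x h i j * (κ j / nodalWeight univ κ j) =
      κ i / nodalWeight univ κ i * CM n κ x h j i := by
  rcases eq_or_ne i j with rfl | hij
  · rw [lagrangeCM_self hκ]
    ring
  have key := sub_mul_eval_derivative_basis_of_ne (v := κ) (mem_univ i) (mem_univ j) hij
  have hwi := nodalWeight_ne_zero hκ.injOn (mem_univ i)
  have hwj := nodalWeight_ne_zero hκ.injOn (mem_univ j)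
  have hij' : κ i - κ j ≠ 0 := sub_ne_zero.mpr (hκ.ne hij)
  have hji' : κ j - κ i ≠ 0 := sub_ne_zero.mpr (hκ.ne hij.symm)
  have hderiv : eval (κ i) (derivative (Lagrange.basis univ κ j)) =
      nodalWeight univ κ j / nodalWeight univ κ i / (κ i - κ j) := by
    rw [eq_div_iff hij', mul_comm, key]
  simp only [lagrangeCM, CM, of_apply, if_neg hij, if_neg hij.symm, hderiv]
  field_simp
  ring

theorem det_smul_one_sub_lagrangeCM (hκ : Function.Injective κ) (x : Fin n → ℂ) (h u : ℂ) :
    (u • (1 : Matrix (Fin n) (Fin n) ℂ) - lagrangeCM κ x h).det =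
      (u • (1 : Matrix (Fin n) (Fin n) ℂ) - CM n κ x h).det := by
  set e : Fin n → ℂ := fun i => κ i / nodalWeight univ κ i
  have hw (i : Fin n) := nodalWeight_ne_zero hκ.injOn (mem_univ i)
  have hrel (i j : Fin n) : (u • 1 - lagrangeCM κ x h) i j * e j =
      e i * (u • 1 - CM n κ x h) j i := by
    rw [Matrix.sub_apply, Matrix.sub_apply, sub_mul, mul_sub, lagrangeCM_mul_eq_mul_CM hκ]
    rcases eq_or_ne i j with rfl | hij
    · simp only [Matrix.smul_apply, one_apply_eq]
      ring
    · simp [e, one_apply_ne hij, one_apply_ne hij.symm]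
  by_cases hzero : ∃ i₀, κ i₀ = 0
  · obtain ⟨i₀, hi₀⟩ := hzero
    obtain ⟨m, rfl⟩ : ∃ m, n = m + 1 := ⟨n - 1, by have := i₀.pos; omega⟩
    refine det_eq_of_mul_eq_mul_transpose_of_eq_zero (i₀ := i₀) (by simp [hi₀])
      (fun i hi => div_ne_zero (fun h0 => hi (hκ (h0.trans hi₀.symm))) (hw i)) ?_ hrel
    simp [lagrangeCM_self hκ]
  · push Not at hzero
    exact det_eq_of_mul_eq_mul_transpose (fun i => div_ne_zero (hzero i) (hw i)) hrel

/-- for pairwise distinct `κ_1,…,κ_n`,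
`W^κ(u) = det(u·1 − C) · ∏_{i<j} (κ_i − κ_j)`. -/
theorem statement17 (n : ℕ) (κ x : Fin n → ℂ) (h u : ℂ)
    (hκ : Function.Injective κ) :
    (Wmat n κ x h u).det =
      (u • (1 : Matrix (Fin n) (Fin n) ℂ) - CM n κ x h).det *
        ∏ p ∈ Finset.univ.filter (fun p : Fin n × Fin n => p.1 < p.2), (κ p.1 - κ p.2) := by
  rw [Wmat_eq_mul_projVandermonde hκ, det_mul, det_smul_one_sub_lagrangeCM hκ,
    det_projVandermonde_one_left]

end GRTV
end
end
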